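/- arXiv:2603.03873 — 5 statements merged into one kernel-verified Lean document; each statement's English description precedes it below -/
import Mathlib

section
/- If s ∈ X·O_K[[X]] is a formal power series over the ring of integers of a finite extension K of ℚ_p whose linear coefficient s'(0) is neither zero nor a root of unity and has positive valuation or is a non-root-of-unity unit, then there exists a unique formal power series Log_s ∈ X·K[[X]] with Log_s'(0) = 1 satisfying Log_s(s(X)) = s'(0)·Log_s(X). -/
/-!
Comparing coefficients of `X ^ n`, the equation `g ∘ s = π • g` with `π = s'(0)` reads
`(π - π ^ n) gₙ = ∑_{k < n} gₖ [Xⁿ] sᵏ`, because `s` has no constant term, so that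
`[Xⁿ] sⁿ = πⁿ`. For `n ≥ 2` the factor `π - π ^ n = π (1 - π ^ (n - 1))` is nonzero since `π`
is neither zero nor a root of unity, so `g₀ = 0` and `g₁ = 1` determine `g` recursively.
-/

open PowerSeries

noncomputable def PSComp {R : Type*} [CommRing R] (f g : PowerSeries R) : PowerSeries R :=
  PowerSeries.mk fun n => ((f.trunc (n + 1)).comp (g.trunc (n + 1))).coeff n

theorem coeff_PSComp {R : Type*} [CommRing R] (f g : R⟦X⟧) (n : ℕ) :
    coeff n (PSComp f g) = ∑ k ∈ Finset.range (n + 1), coeff k f * coeff n (g ^ k) := by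
  have trunc_pow_coeff (k : ℕ) : (g.trunc (n + 1) ^ k).coeff n = coeff n (g ^ k) := by
    have h := congrArg (Polynomial.coeff · n) (trunc_trunc_pow g (n + 1) k)
    simp only [coeff_trunc, if_pos n.lt_succ_self] at h
    rwa [← Polynomial.coeff_coe, Polynomial.coe_pow]
  simp [PSComp, Polynomial.comp, eval₂_trunc_eq_sum_range, trunc_pow_coeff]

theorem PSComp_eq_C_mul_iff {R : Type*} [CommRing R] (f g : R⟦X⟧) (c : R) :
    PSComp f g = C c * f ↔
      ∀ n, ∑ k ∈ Finset.range (n + 1), coeff k f * coeff n (g ^ k) = c * coeff n f := by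
  simp only [PowerSeries.ext_iff, coeff_PSComp, coeff_C_mul]

theorem coeff_pow_self_of_constantCoeff_eq_zero {R : Type*} [CommRing R] {s : R⟦X⟧}
    (h0 : constantCoeff s = 0) (n : ℕ) : coeff n (s ^ n) = coeff 1 s ^ n := by
  obtain ⟨t, rfl⟩ := X_dvd_iff.mpr h0
  simpa [mul_pow] using coeff_X_pow_mul (t ^ n) n 0

theorem sub_pow_succ_ne_zero {R : Type*} [Ring R] [NoZeroDivisors R] {x : R} (hx : x ≠ 0)
    {n : ℕ} (hn : x ^ n ≠ 1) : x - x ^ (n + 1) ≠ 0 := by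
  rw [pow_succ', ← mul_one_sub]
  exact mul_ne_zero hx (sub_ne_zero.mpr hn.symm)

section Field

variable {K : Type*} [Field K] (s : K⟦X⟧)

noncomputable def logCoeff : ℕ → K
  | 0 => 0
  | 1 => 1
  | n + 2 =>
    (∑ k ∈ (Finset.range (n + 2)).attach, logCoeff k.1 * coeff (n + 2) (s ^ k.1)) /
      (coeff 1 s - coeff 1 s ^ (n + 2))
  decreasing_by exact Finset.mem_range.mp k.2

@[simp]
theorem logCoeff_zero : logCoeff s 0 = 0 := by
  rw [logCoeff]

@[simp]
theorem logCoeff_one : logCoeff s 1 = 1 := by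
  rw [logCoeff]

theorem logCoeff_of_two_le {n : ℕ} (hn : 2 ≤ n) :
    logCoeff s n = (∑ k ∈ Finset.range n, logCoeff s k * coeff n (s ^ k)) /
      (coeff 1 s - coeff 1 s ^ n) := by
  obtain ⟨m, rfl⟩ := Nat.exists_eq_add_of_le' hn
  rw [logCoeff, Finset.sum_attach _ fun k => logCoeff s k * coeff (m + 2) (s ^ k)]

variable {s}

theorem sum_coeff_pow_eq_iff (h0 : constantCoeff s = 0) (a : ℕ → K) {n : ℕ}
    (hn : coeff 1 s - coeff 1 s ^ n ≠ 0) :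
    ∑ k ∈ Finset.range (n + 1), a k * coeff n (s ^ k) = coeff 1 s * a n ↔
      a n = (∑ k ∈ Finset.range n, a k * coeff n (s ^ k)) / (coeff 1 s - coeff 1 s ^ n) := by
  rw [Finset.sum_range_succ, coeff_pow_self_of_constantCoeff_eq_zero h0, eq_div_iff hn]
  constructor <;> intro h <;> linear_combination -h

theorem PSComp_mk_logCoeff (h0 : constantCoeff s = 0)
    (hs : ∀ n, 2 ≤ n → coeff 1 s - coeff 1 s ^ n ≠ 0) :
    PSComp (mk (logCoeff s)) s = C (coeff 1 s) * mk (logCoeff s) := by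
  rw [PSComp_eq_C_mul_iff]
  simp only [coeff_mk]
  rintro (_ | _ | n)
  · simp
  · simp [Finset.sum_range_succ]
  · exact (sum_coeff_pow_eq_iff h0 _ (hs _ le_add_self)).mpr (logCoeff_of_two_le s le_add_self)

theorem eq_mk_logCoeff (h0 : constantCoeff s = 0)
    (hs : ∀ n, 2 ≤ n → coeff 1 s - coeff 1 s ^ n ≠ 0) {g : K⟦X⟧} (hg0 : constantCoeff g = 0)
    (hg1 : coeff 1 g = 1) (hg : PSComp g s = C (coeff 1 s) * g) :
    g = mk (logCoeff s) := by
  rw [PSComp_eq_C_mul_iff] at hg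
  ext n
  induction n using Nat.strong_induction_on with
  | _ n ih =>
    rw [coeff_mk]
    match n with
    | 0 => simpa using hg0
    | 1 => simpa using hg1
    | n + 2 =>
      rw [(sum_coeff_pow_eq_iff h0 (coeff · g) (hs _ le_add_self)).mp (hg _),
        logCoeff_of_two_le s le_add_self]
      refine congrArg (· / _) (Finset.sum_congr rfl fun k hk => ?_)
      rw [ih k (Finset.mem_range.mp hk), coeff_mk]

end Field

theorem exists_unique_logarithm_general
    (K : Type*) [NormedField K]
    (s : PowerSeries K)
    (h0 : PowerSeries.constantCoeff (R := K) s = 0)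
    (hne : PowerSeries.coeff (R := K) 1 s ≠ 0)
    (hru : ∀ n : ℕ, 0 < n → (PowerSeries.coeff (R := K) 1 s) ^ n ≠ 1) :
    ∃! g : PowerSeries K,
      PowerSeries.constantCoeff (R := K) g = 0 ∧
      PowerSeries.coeff (R := K) 1 g = 1 ∧
      PSComp g s = PowerSeries.C (R := K) (PowerSeries.coeff (R := K) 1 s) * g := by
  have hs : ∀ n, 2 ≤ n → coeff 1 s - coeff 1 s ^ n ≠ 0 := by
    intro n hn
    obtain ⟨m, rfl⟩ := Nat.exists_eq_add_of_le' (show 1 ≤ n by omega)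
    exact sub_pow_succ_ne_zero hne (hru m (by omega))
  refine ⟨mk (logCoeff s), ⟨by simp, by simp, PSComp_mk_logCoeff h0 hs⟩, ?_⟩
  rintro g ⟨hg0, hg1, hg⟩
  exact eq_mk_logCoeff h0 hs hg0 hg1 hg

/-- Existence and uniqueness of the Lubin logarithm: if `s ∈ X·O_K[[X]]` over the ring of
integers of a finite extension `K` of `ℚ_p` has linear coefficient `s'(0)` which is neither
zero nor a root of unity, then there is a unique `Log_s ∈ X·K[[X]]` with `Log_s'(0) = 1` and
`Log_s ∘ s = s'(0) · Log_s`. -/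
theorem exists_unique_logarithm
    {p : ℕ} [Fact p.Prime] (K : Type*) [NormedField K]
    [Algebra ℚ_[p] K] [FiniteDimensional ℚ_[p] K]
    (hiso : ∀ x : ℚ_[p], ‖algebraMap ℚ_[p] K x‖ = ‖x‖)
    (hna : ∀ x y : K, ‖x + y‖ ≤ max ‖x‖ ‖y‖)
    (s : PowerSeries K)
    (hint : ∀ n : ℕ, ‖PowerSeries.coeff (R := K) n s‖ ≤ 1)
    (h0 : PowerSeries.constantCoeff (R := K) s = 0)
    (hne : PowerSeries.coeff (R := K) 1 s ≠ 0)
    (hru : ∀ n : ℕ, 0 < n → (PowerSeries.coeff (R := K) 1 s) ^ n ≠ 1) :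
    ∃! g : PowerSeries K,
      PowerSeries.constantCoeff (R := K) g = 0 ∧
      PowerSeries.coeff (R := K) 1 g = 1 ∧
      PSComp g s = PowerSeries.C (R := K) (PowerSeries.coeff (R := K) 1 s) * g :=
  exists_unique_logarithm_general K s h0 hne hru
end

section
/- If two formal power series s, t ∈ X·O_K[[X]] commute under composition, both have linear coefficients that are nonzero and not roots of unity, then the logarithms Log_s and Log_t (the unique series g with g'(0)=1 and g∘s = s'(0)·g, respectively for t) coincide. -/
/-!
Comparing coefficients of `X ^ n` in `f ∘ s = s'(0) • f` gives
`(s'(0) ^ n - s'(0)) fₙ = (an expression in f₀, …, fₙ₋₁)`, so when `s'(0)` is neither zero nor a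
root of unity a solution is determined by its constant and linear coefficients. If `t` commutes
with `s`, then `Log_s ∘ t` and `t'(0) • Log_s` both solve the equation for `s` and have the same
linear coefficient, hence are equal; thus `Log_s` also solves the equation for `t`, and by the same
uniqueness it equals `Log_t`.
-/

open PowerSeries

theorem pow_ne_self_of_pow_ne_one {M : Type*} [MonoidWithZero M] [IsRightCancelMulZero M]
    {c : M} (hc0 : c ≠ 0) (hc : ∀ n, 0 < n → c ^ n ≠ 1) {n : ℕ} (hn : 2 ≤ n) : c ^ n ≠ c := by
  obtain ⟨m, rfl⟩ := Nat.exists_eq_add_of_le' hn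
  intro h
  refine hc (m + 1) (Nat.succ_pos m) (mul_right_cancel₀ hc0 ?_)
  rw [← pow_succ, one_mul, h]

namespace PowerSeries

variable {R : Type*} [CommRing R]

theorem coe_comp_eq_subst (P Q : Polynomial R) (hQ : Q.coeff 0 = 0) :
    ((P.comp Q : Polynomial R) : R⟦X⟧) = (P : R⟦X⟧).subst (Q : R⟦X⟧) := by
  rw [subst_coe (HasSubst.of_constantCoeff_zero' (by simpa using hQ)), Polynomial.comp_eq_aeval]
  exact (Polynomial.aeval_algHom_apply (Polynomial.coeToPowerSeries.algHom R) Q P).symm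

theorem coeff_pow_eq_zero_of_lt {g : R⟦X⟧} (hg : constantCoeff g = 0) {n d : ℕ} (h : n < d) :
    coeff n (g ^ d) = 0 :=
  X_pow_dvd_iff.mp (pow_dvd_pow_of_dvd (X_dvd_iff.mpr hg) d) n h

theorem coeff_subst_eq_sum_range {f g : R⟦X⟧} (hg : constantCoeff g = 0) (n : ℕ) :
    coeff n (f.subst g) = ∑ d ∈ Finset.range (n + 1), coeff d f * coeff n (g ^ d) := by
  rw [coeff_subst' (HasSubst.of_constantCoeff_zero' hg)]
  refine finsum_eq_sum_of_support_subset _ fun d hd => Finset.mem_range.mpr ?_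
  by_contra! h
  exact hd (by simp only [coeff_pow_eq_zero_of_lt hg h, smul_zero])

theorem coeff_self_pow {g : R⟦X⟧} (hg : constantCoeff g = 0) (n : ℕ) :
    coeff n (g ^ n) = coeff 1 g ^ n := by
  obtain ⟨u, rfl⟩ := X_dvd_iff.mpr hg
  simp [mul_pow, coeff_X_pow_mul', coeff_succ_X_mul]

theorem coeff_one_subst (f : R⟦X⟧) {g : R⟦X⟧} (hg : constantCoeff g = 0) :
    coeff 1 (f.subst g) = coeff 1 f * coeff 1 g := by
  simp [coeff_subst_eq_sum_range hg, Finset.sum_range_succ]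

theorem subst_C_mul (c : R) (f : R⟦X⟧) {g : R⟦X⟧} (hg : constantCoeff g = 0) :
    (C c * f).subst g = C c * f.subst g := by
  rw [subst_mul (HasSubst.of_constantCoeff_zero' hg), subst_C]
  rfl

section NoZeroDivisors

variable [NoZeroDivisors R] {s : R⟦X⟧}

theorem eq_zero_of_subst_eq_C_mul (hs0 : constantCoeff s = 0)
    (hs : ∀ n, 2 ≤ n → coeff 1 s ^ n ≠ coeff 1 s) {f : R⟦X⟧} (hf0 : constantCoeff f = 0)
    (hf1 : coeff 1 f = 0) (hf : f.subst s = C (coeff 1 s) * f) : f = 0 := by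
  ext n
  induction n using Nat.strong_induction_on with
  | _ n ih =>
  match n with
  | 0 => simpa using hf0
  | 1 => simpa using hf1
  | n + 2 =>
    have hn := congrArg (coeff (n + 2)) hf
    rw [coeff_subst_eq_sum_range hs0, Finset.sum_range_succ, coeff_C_mul, coeff_self_pow hs0,
      Finset.sum_eq_zero fun d hd => by rw [ih d (Finset.mem_range.mp hd), map_zero, zero_mul],
      zero_add] at hn
    have hres : coeff (n + 2) f * (coeff 1 s ^ (n + 2) - coeff 1 s) = 0 := by
      linear_combination hn
    simpa [sub_eq_zero, hs (n + 2) (by omega)] using hres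

theorem eq_of_subst_eq_C_mul (hs0 : constantCoeff s = 0)
    (hs : ∀ n, 2 ≤ n → coeff 1 s ^ n ≠ coeff 1 s) {f g : R⟦X⟧}
    (h0 : constantCoeff f = constantCoeff g) (h1 : coeff 1 f = coeff 1 g)
    (hf : f.subst s = C (coeff 1 s) * f) (hg : g.subst s = C (coeff 1 s) * g) : f = g := by
  refine sub_eq_zero.mp (eq_zero_of_subst_eq_C_mul hs0 hs (by simp [h0]) (by simp [h1]) ?_)
  rw [subst_sub (HasSubst.of_constantCoeff_zero' hs0), hf, hg, mul_sub]

theorem subst_eq_C_mul_of_subst_comm {t g : R⟦X⟧} (hs0 : constantCoeff s = 0)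
    (ht0 : constantCoeff t = 0) (hs : ∀ n, 2 ≤ n → coeff 1 s ^ n ≠ coeff 1 s)
    (hst : s.subst t = t.subst s) (hg0 : constantCoeff g = 0)
    (hg : g.subst s = C (coeff 1 s) * g) : g.subst t = C (coeff 1 t) * g := by
  have hs' := HasSubst.of_constantCoeff_zero' hs0
  have ht' := HasSubst.of_constantCoeff_zero' ht0
  refine eq_of_subst_eq_C_mul hs0 hs ?_ ?_ ?_ ?_
  · rw [map_mul, hg0, mul_zero]
    exact constantCoeff_subst_eq_zero ht0 _ hg0
  · rw [coeff_one_subst _ ht0, coeff_C_mul, mul_comm]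
  · rw [subst_comp_subst_apply ht' hs', ← hst, ← subst_comp_subst_apply hs' ht', hg,
      subst_C_mul _ _ ht0]
  · rw [subst_C_mul _ _ hs0, hg]
    ring

end NoZeroDivisors

end PowerSeries

theorem PSComp_eq_subst {R : Type*} [CommRing R] (f : R⟦X⟧) {g : R⟦X⟧}
    (hg : constantCoeff g = 0) :
    PSComp f g = f.subst g := by
  ext n
  have hQ : (g.trunc (n + 1)).coeff 0 = 0 := by simp [coeff_trunc, hg]
  have hQ' : constantCoeff (g.trunc (n + 1) : R⟦X⟧) = 0 := by simpa using hQ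
  rw [PSComp, coeff_mk, ← Polynomial.coeff_coe, coe_comp_eq_subst _ _ hQ,
    coeff_subst_eq_sum_range hQ', coeff_subst_eq_sum_range hg]
  refine Finset.sum_congr rfl fun d hd => ?_
  have hd : d < n + 1 := Finset.mem_range.mp hd
  rw [coeff_coe_trunc_of_lt hd]
  congr 1
  rw [← coeff_coe_trunc_of_lt (lt_add_one n), trunc_trunc_pow,
    coeff_coe_trunc_of_lt (lt_add_one n)]

theorem logarithms_of_commuting_series_coincide_general
    (K : Type*) [NormedField K]
    (s t : PowerSeries K)
    (hs0 : PowerSeries.constantCoeff s = 0)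
    (ht0 : PowerSeries.constantCoeff t = 0)
    (hsne : PowerSeries.coeff 1 s ≠ 0)
    (htne : PowerSeries.coeff 1 t ≠ 0)
    (hsru : ∀ n : ℕ, 0 < n → (PowerSeries.coeff 1 s) ^ n ≠ 1)
    (htru : ∀ n : ℕ, 0 < n → (PowerSeries.coeff 1 t) ^ n ≠ 1)
    (hcomm : PSComp s t = PSComp t s)
    (g h : PowerSeries K)
    (hg : PowerSeries.constantCoeff g = 0 ∧ PowerSeries.coeff 1 g = 1 ∧
      PSComp g s = PowerSeries.C (PowerSeries.coeff 1 s) * g)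
    (hh : PowerSeries.constantCoeff h = 0 ∧ PowerSeries.coeff 1 h = 1 ∧
      PSComp h t = PowerSeries.C (PowerSeries.coeff 1 t) * h) :
    g = h := by
  obtain ⟨hg0, hg1, hgs⟩ := hg
  obtain ⟨hh0, hh1, hht⟩ := hh
  rw [PSComp_eq_subst _ hs0] at hgs
  rw [PSComp_eq_subst _ ht0] at hht
  rw [PSComp_eq_subst _ ht0, PSComp_eq_subst _ hs0] at hcomm
  have hgt : g.subst t = C (coeff 1 t) * g :=
    subst_eq_C_mul_of_subst_comm hs0 ht0 (fun _ => pow_ne_self_of_pow_ne_one hsne hsru) hcomm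
      hg0 hgs
  exact eq_of_subst_eq_C_mul ht0 (fun _ => pow_ne_self_of_pow_ne_one htne htru)
    (hg0.trans hh0.symm) (hg1.trans hh1.symm) hgt hht

/-- If `s, t ∈ X·O_K[[X]]` commute under composition and both have linear coefficients that
are nonzero and not roots of unity, then their logarithms (the unique series `g` with
`g(0) = 0`, `g'(0) = 1`, `g ∘ s = s'(0)·g`, resp. for `t`) coincide. -/
theorem logarithms_of_commuting_series_coincide
    {p : ℕ} [Fact p.Prime] (K : Type*) [NormedField K]
    [Algebra ℚ_[p] K] [FiniteDimensional ℚ_[p] K]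
    (hiso : ∀ x : ℚ_[p], ‖algebraMap ℚ_[p] K x‖ = ‖x‖)
    (hna : ∀ x y : K, ‖x + y‖ ≤ max ‖x‖ ‖y‖)
    (s t : PowerSeries K)
    (hsint : ∀ n : ℕ, ‖PowerSeries.coeff n s‖ ≤ 1)
    (htint : ∀ n : ℕ, ‖PowerSeries.coeff n t‖ ≤ 1)
    (hs0 : PowerSeries.constantCoeff s = 0)
    (ht0 : PowerSeries.constantCoeff t = 0)
    (hsne : PowerSeries.coeff 1 s ≠ 0)
    (htne : PowerSeries.coeff 1 t ≠ 0)
    (hsru : ∀ n : ℕ, 0 < n → (PowerSeries.coeff 1 s) ^ n ≠ 1)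
    (htru : ∀ n : ℕ, 0 < n → (PowerSeries.coeff 1 t) ^ n ≠ 1)
    (hcomm : PSComp s t = PSComp t s)
    (g h : PowerSeries K)
    (hg : PowerSeries.constantCoeff g = 0 ∧ PowerSeries.coeff 1 g = 1 ∧
      PSComp g s = PowerSeries.C (PowerSeries.coeff 1 s) * g)
    (hh : PowerSeries.constantCoeff h = 0 ∧ PowerSeries.coeff 1 h = 1 ∧
      PSComp h t = PowerSeries.C (PowerSeries.coeff 1 t) * h) :
    g = h :=
  logarithms_of_commuting_series_coincide_general K s t hs0 ht0 hsne htne hsru htru hcomm g h hg hh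
end

section
/- Let K be a finite extension of ℚ_p with ramification index e satisfying gcd(e, p-1) = 1, and let f ∈ X·O_K[[X]] be such that f'(0) is a uniformizer of ℤ_p (i.e., v_p(f'(0)) = 1), f has Weierstrass degree p (exactly p roots counted with multiplicity in the open unit disk), and all p−1 nonzero roots of f have valuation v_K equal to e/(p−1). Then the Weierstrass polynomial of f(X)/X is irreducible over K. -/
/-!
The Weierstrass factorization `f = X · P · U`, with `U` a unit of `O_K⟦X⟧`, makes `P`
distinguished, so its roots in `ℂ_p` lie in the open unit disk; they are nonzero roots of `f`,
hence all of norm `p ^ (-1/(p-1))`. A monic factor of `P` of degree `d` then has constant term of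
norm `p ^ (-d/(p-1))`, which must lie in the value group `p ^ (ℤ/e)` of `K`. As
`gcd(e, p-1) = 1`, this forces `(p-1) ∣ d`, so `d = 0` or `d = p-1`.
-/

open PowerSeries

/-- Evaluation of a power series over `K` at a point of `Cp` (converges when the
coefficients are bounded and `‖x‖ < 1`). -/
noncomputable def PSEval {K Cp : Type*} [NormedField K] [NormedField Cp] [Algebra K Cp]
    (f : PowerSeries K) (x : Cp) : Cp :=
  ∑' n : ℕ, algebraMap K Cp (PowerSeries.coeff n f) * x ^ n

theorem IsUltrametricDist.norm_sum_lt_of_forall_lt {M ι : Type*} [SeminormedAddCommGroup M]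
    [IsUltrametricDist M] {s : Finset ι} {f : ι → M} {C : ℝ} (hC : 0 < C)
    (h : ∀ i ∈ s, ‖f i‖ < C) : ‖∑ i ∈ s, f i‖ < C := by
  rcases s.eq_empty_or_nonempty with rfl | hs
  · simpa using hC
  · obtain ⟨i, hi, hle⟩ := IsUltrametricDist.exists_norm_finsetSum_le_of_nonempty hs f
    exact hle.trans_lt (h i hi)

theorem PowerSeries.norm_coeff_mul_le_one {R : Type*} [NormedRing R] [IsUltrametricDist R]
    {g h : PowerSeries R} (hg : ∀ n, ‖coeff n g‖ ≤ 1) (hh : ∀ n, ‖coeff n h‖ ≤ 1) (n : ℕ) :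
    ‖coeff n (g * h)‖ ≤ 1 := by
  rw [coeff_mul]
  refine IsUltrametricDist.norm_sum_le_of_forall_le_of_nonneg zero_le_one fun ij _ => ?_
  exact (norm_mul_le _ _).trans (mul_le_one₀ (hg ij.1) (norm_nonneg _) (hh ij.2))

section PSEval

variable {K Cp : Type*} [NormedField K] [NormedField Cp] [Algebra K Cp]

theorem summable_norm_algebraMap_coeff_mul_pow (hCp : ∀ x : K, ‖algebraMap K Cp x‖ = ‖x‖)
    {g : PowerSeries K} (hg : ∀ n, ‖coeff n g‖ ≤ 1) {z : Cp} (hz : ‖z‖ < 1) :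
    Summable fun n => ‖algebraMap K Cp (coeff n g) * z ^ n‖ := by
  refine .of_nonneg_of_le (fun n => norm_nonneg _) (fun n => ?_)
    (summable_geometric_of_lt_one (norm_nonneg z) hz)
  rw [norm_mul, norm_pow, hCp]
  exact mul_le_of_le_one_left (pow_nonneg (norm_nonneg z) n) (hg n)

theorem PSEval_mul [CompleteSpace Cp] (hCp : ∀ x : K, ‖algebraMap K Cp x‖ = ‖x‖)
    {g h : PowerSeries K} (hg : ∀ n, ‖coeff n g‖ ≤ 1) (hh : ∀ n, ‖coeff n h‖ ≤ 1)
    {z : Cp} (hz : ‖z‖ < 1) : PSEval (g * h) z = PSEval g z * PSEval h z := by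
  rw [PSEval, PSEval, PSEval, tsum_mul_tsum_eq_tsum_sum_antidiagonal_of_summable_norm
    (summable_norm_algebraMap_coeff_mul_pow hCp hg hz)
    (summable_norm_algebraMap_coeff_mul_pow hCp hh hz)]
  refine tsum_congr fun n => ?_
  rw [coeff_mul, map_sum, Finset.sum_mul]
  refine Finset.sum_congr rfl fun ij hij => ?_
  rw [Finset.HasAntidiagonal.mem_antidiagonal] at hij
  rw [map_mul, ← hij, pow_add]
  ring

theorem PSEval_X (z : Cp) : PSEval (X : PowerSeries K) z = z := by
  rw [PSEval, tsum_eq_single 1 fun n hn => by simp [coeff_X, hn]]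
  simp

theorem PSEval_coe (P : Polynomial K) (z : Cp) :
    PSEval (P : PowerSeries K) z = P.eval₂ (algebraMap K Cp) z := by
  rw [PSEval, tsum_eq_sum (s := Finset.range (P.natDegree + 1)), Polynomial.eval₂_eq_sum_range]
  · simp only [Polynomial.coeff_coe]
  · intro n hn
    rw [Polynomial.coeff_coe, Polynomial.coeff_eq_zero_of_natDegree_lt (by simpa using hn)]
    simp

theorem PSEval_X_mul_coe_mul [CompleteSpace Cp] [IsUltrametricDist K]
    (hCp : ∀ x : K, ‖algebraMap K Cp x‖ = ‖x‖) {P : Polynomial K} (hP : ∀ n, ‖P.coeff n‖ ≤ 1)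
    {U : PowerSeries K} (hU : ∀ n, ‖coeff n U‖ ≤ 1) {z : Cp} (hz : ‖z‖ < 1) :
    PSEval (X * ((P : PowerSeries K) * U)) z = z * (P.eval₂ (algebraMap K Cp) z * PSEval U z) := by
  have hPc (n : ℕ) : ‖coeff n (P : PowerSeries K)‖ ≤ 1 := by rw [Polynomial.coeff_coe]; exact hP n
  have hXc (n : ℕ) : ‖coeff n (X : PowerSeries K)‖ ≤ 1 := by rw [coeff_X]; split_ifs <;> simp
  rw [PSEval_mul hCp hXc (norm_coeff_mul_le_one hPc hU) hz, PSEval_mul hCp hPc hU hz, PSEval_X,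
    PSEval_coe]

end PSEval

theorem PowerSeries.norm_coeff_lt_one_of_norm_coeff_mul_lt_one {K : Type*} [NormedField K]
    [IsUltrametricDist K] {g u : PowerSeries K} (hu : ∀ n, ‖coeff n u‖ ≤ 1)
    (hu0 : ‖constantCoeff u‖ = 1) {N : ℕ} (hgu : ∀ n < N, ‖coeff n (g * u)‖ < 1) :
    ∀ n < N, ‖coeff n g‖ < 1 := by
  intro n
  induction n using Nat.strong_induction_on with
  | _ n ih =>
    intro hn
    have hsplit : coeff n g * constantCoeff u = coeff n (g * u) -
        ∑ k ∈ Finset.range n, coeff k g * coeff (n - k) u := by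
      rw [coeff_mul,
        Finset.Nat.sum_antidiagonal_eq_sum_range_succ (fun i j => coeff i g * coeff j u),
        Finset.sum_range_succ, Nat.sub_self, coeff_zero_eq_constantCoeff_apply]
      ring
    have hlower : ‖∑ k ∈ Finset.range n, coeff k g * coeff (n - k) u‖ < 1 := by
      refine IsUltrametricDist.norm_sum_lt_of_forall_lt one_pos fun k hk => ?_
      have hk : k < n := Finset.mem_range.mp hk
      rw [norm_mul]
      exact (mul_le_of_le_one_right (norm_nonneg _) (hu _)).trans_lt (ih k hk (hk.trans hn))
    calc ‖coeff n g‖ = ‖coeff n g * constantCoeff u‖ := by rw [norm_mul, hu0, mul_one]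
      _ < 1 := by
        rw [hsplit, sub_eq_add_neg]
        exact (IsUltrametricDist.norm_add_le_max _ _).trans_lt
          (max_lt (hgu n hn) (by rwa [norm_neg]))

theorem Polynomial.Monic.norm_lt_one_of_isRoot {L : Type*} [NormedField L] [IsUltrametricDist L]
    {Q : Polynomial L} (hQ : Q.Monic) (hcoeff : ∀ i < Q.natDegree, ‖Q.coeff i‖ < 1) {z : L}
    (hz : Q.IsRoot z) : ‖z‖ < 1 := by
  by_contra! hz1
  have hzn : 0 < ‖z‖ ^ Q.natDegree := pow_pos (one_pos.trans_le hz1) _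
  have hlower : ‖∑ i ∈ Finset.range Q.natDegree, Q.coeff i * z ^ i‖ < ‖z ^ Q.natDegree‖ := by
    rw [norm_pow]
    refine IsUltrametricDist.norm_sum_lt_of_forall_lt hzn fun i hi => ?_
    have hi : i < Q.natDegree := Finset.mem_range.mp hi
    rw [norm_mul, norm_pow]
    calc ‖Q.coeff i‖ * ‖z‖ ^ i < ‖z‖ ^ i :=
          mul_lt_of_lt_one_left (pow_pos (one_pos.trans_le hz1) _) (hcoeff i hi)
      _ ≤ ‖z‖ ^ Q.natDegree := pow_le_pow_right₀ hz1 hi.le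
  have heval : Q.eval z = ∑ i ∈ Finset.range Q.natDegree, Q.coeff i * z ^ i + z ^ Q.natDegree := by
    conv_lhs => rw [hQ.as_sum]
    simp [Polynomial.eval_finsetSum, add_comm]
  have := IsUltrametricDist.norm_add_eq_max_of_norm_ne_norm hlower.ne
  rw [← heval, hz.eq_zero, norm_zero, max_eq_right hlower.le, norm_pow] at this
  exact hzn.ne' this.symm

theorem Polynomial.Monic.norm_lt_one_of_mem_roots_map {K L : Type*} [NormedField K]
    [IsUltrametricDist K] [NormedField L] [IsUltrametricDist L] {φ : K →+* L}
    (hφ : ∀ x, ‖φ x‖ = ‖x‖) {P : Polynomial K} (hP : P.Monic) {U : PowerSeries K}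
    (hU : ∀ n, ‖PowerSeries.coeff n U‖ ≤ 1) (hU0 : ‖PowerSeries.constantCoeff U‖ = 1)
    (hPU : ∀ n < P.natDegree, ‖PowerSeries.coeff n ((P : PowerSeries K) * U)‖ < 1) {z : L}
    (hz : z ∈ (P.map φ).roots) : ‖z‖ < 1 := by
  refine (hP.map φ).norm_lt_one_of_isRoot (fun i hi => ?_) (Polynomial.isRoot_of_mem_roots hz)
  rw [Polynomial.natDegree_map] at hi
  rw [Polynomial.coeff_map, hφ, ← Polynomial.coeff_coe]
  exact PowerSeries.norm_coeff_lt_one_of_norm_coeff_mul_lt_one hU hU0 hPU i hi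

theorem Polynomial.Monic.norm_coeff_zero_of_forall_mem_roots {K L : Type*} [NormedField K]
    [NormedField L] [IsAlgClosed L] {φ : K →+* L} (hφ : ∀ x, ‖φ x‖ = ‖x‖) {a : Polynomial K}
    (ha : a.Monic) {r : ℝ} (hr : ∀ z ∈ (a.map φ).roots, ‖z‖ = r) :
    ‖a.coeff 0‖ = r ^ a.natDegree := by
  have hs := IsAlgClosed.splits (a.map φ)
  have hnorm : (a.map φ).roots.map norm = Multiset.replicate a.natDegree r := by
    rw [Multiset.map_congr rfl hr, Multiset.map_const', ← hs.natDegree_eq_card_roots,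
      Polynomial.natDegree_map]
  have hprod : ‖(a.map φ).roots.prod‖ = ((a.map φ).roots.map norm).prod :=
    map_multiset_prod (normHom : L →*₀ ℝ) _
  rw [← hφ, ← Polynomial.coeff_map, hs.coeff_zero_eq_prod_roots_of_monic (ha.map φ), norm_mul,
    norm_pow, norm_neg, norm_one, one_pow, one_mul, hprod, hnorm, Multiset.prod_replicate]

theorem Nat.dvd_of_pow_rpow_eq_rpow {b : ℝ} (hb : 1 < b) {d n e : ℕ} {m : ℤ} (hn : 0 < n)
    (he : 0 < e) (hne : n.Coprime e) (h : (b ^ (-1 / (n : ℝ))) ^ d = b ^ (-(m : ℝ) / e)) :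
    n ∣ d := by
  rw [← Real.rpow_natCast, ← Real.rpow_mul (by positivity),
    Real.rpow_right_inj (by positivity) hb.ne'] at h
  have hreal : (d : ℝ) * e = m * n := by
    field_simp at h
    linarith
  have hint : (n : ℤ) ∣ d * e := ⟨m, by exact_mod_cast hreal.trans (mul_comm _ _)⟩
  exact hne.dvd_of_dvd_mul_right (by exact_mod_cast hint)

theorem Polynomial.Monic.irreducible_of_forall_norm_root {K L : Type*} [NormedField K]
    [NormedField L] [IsAlgClosed L] {φ : K →+* L} (hφ : ∀ x, ‖φ x‖ = ‖x‖) {b : ℝ} (hb : 1 < b)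
    {e : ℕ} (he : 0 < e) (hval : ∀ x : K, x ≠ 0 → ∃ m : ℤ, ‖x‖ = b ^ (-(m : ℝ) / e))
    {P : Polynomial K} (hP : P.Monic) (hPdeg : 0 < P.natDegree) (hcop : P.natDegree.Coprime e)
    (hroot : ∀ z ∈ (P.map φ).roots, ‖z‖ = b ^ (-1 / (P.natDegree : ℝ))) : Irreducible P := by
  rw [hP.irreducible_iff_natDegree]
  refine ⟨fun h1 => by simp [h1] at hPdeg, fun a c ha hc hac => ?_⟩
  have hdeg : a.natDegree + c.natDegree = P.natDegree := by rw [← ha.natDegree_mul hc, hac]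
  have hnorm := ha.norm_coeff_zero_of_forall_mem_roots hφ fun z hz => hroot z
    (Multiset.mem_of_le (Polynomial.roots.le_of_dvd (Polynomial.map_ne_zero hP.ne_zero)
      (Polynomial.map_dvd _ ⟨c, hac.symm⟩)) hz)
  have ha0 : a.coeff 0 ≠ 0 := by
    rw [← norm_ne_zero_iff, hnorm]
    exact pow_ne_zero _ (Real.rpow_pos_of_pos (zero_lt_one.trans hb) _).ne'
  obtain ⟨m, hm⟩ := hval _ ha0
  have hdvd : P.natDegree ∣ a.natDegree :=
    Nat.dvd_of_pow_rpow_eq_rpow (m := m) hb hPdeg he hcop (by rw [← hnorm, hm])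
  rcases Nat.eq_zero_or_pos a.natDegree with h | h
  · exact .inl h
  · have := Nat.le_of_dvd h hdvd
    exact .inr (by omega)

theorem weierstrass_polynomial_irreducible_general
    {p : ℕ} [Fact p.Prime] (K : Type*) [NormedField K]
    [Algebra ℚ_[p] K]
    (hKna : ∀ x y : K, ‖x + y‖ ≤ max ‖x‖ ‖y‖)
    -- ramification index e of K/ℚ_p, with gcd(e, p-1) = 1
    (e : ℕ) (he : 0 < e)
    (hvalgrp : ∀ x : K, x ≠ 0 → ∃ m : ℤ, ‖x‖ = (p : ℝ) ^ (-(m : ℝ) / (e : ℝ)))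
    (hgcd : Nat.gcd e (p - 1) = 1)
    -- the field ℂ_p
    (Cp : Type*) [NormedField Cp] [IsAlgClosed Cp] [CompleteSpace Cp] [Algebra K Cp]
    (hCp : ∀ x : K, ‖algebraMap K Cp x‖ = ‖x‖)
    (hna : ∀ x y : Cp, ‖x + y‖ ≤ max ‖x‖ ‖y‖)
    -- the series f
    (f : PowerSeries K)
    (hunif : ∃ a : ℚ_[p], ‖a‖ = (p : ℝ)⁻¹ ∧ algebraMap ℚ_[p] K a = PowerSeries.coeff 1 f)
    (hWdeg : (∀ n : ℕ, n < p → ‖PowerSeries.coeff n f‖ < 1) ∧ ‖PowerSeries.coeff p f‖ = 1)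
    (hroots : ∀ x : Cp, ‖x‖ < 1 → x ≠ 0 → PSEval f x = 0 →
      ‖x‖ = (p : ℝ) ^ (-(1 : ℝ) / ((p : ℝ) - 1)))
    -- the Weierstrass factorization f = X · P · U
    (P : Polynomial K) (U : PowerSeries K)
    (hP : P.Monic) (hPdeg : P.natDegree = p - 1)
    (hPint : ∀ n : ℕ, ‖P.coeff n‖ ≤ 1)
    (hUint : ∀ n : ℕ, ‖PowerSeries.coeff n U‖ ≤ 1)
    (hUunit : ‖PowerSeries.constantCoeff U‖ = 1)
    (hfac : f = PowerSeries.X * ((P : PowerSeries K) * U)) :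
    Irreducible P := by
  have := IsUltrametricDist.isUltrametricDist_of_forall_norm_add_le_max_norm hKna
  have := IsUltrametricDist.isUltrametricDist_of_forall_norm_add_le_max_norm hna
  have hp : p.Prime := Fact.out
  have hcoeff_f (n : ℕ) : coeff (n + 1) f = coeff n ((P : PowerSeries K) * U) := by
    rw [hfac, coeff_succ_X_mul]
  have hP0 : P.coeff 0 ≠ 0 := by
    obtain ⟨a, ha, hae⟩ := hunif
    intro h
    rw [hcoeff_f, coeff_zero_eq_constantCoeff_apply, map_mul, Polynomial.constantCoeff_coe, h,
      zero_mul, ← map_zero (algebraMap ℚ_[p] K)] at hae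
    simp [(algebraMap ℚ_[p] K).injective hae] at ha
    exact hp.ne_zero (by exact_mod_cast ha.symm)
  refine hP.irreducible_of_forall_norm_root hCp (by exact_mod_cast hp.one_lt) he hvalgrp
    (hPdeg ▸ Nat.sub_pos_of_lt hp.one_lt) (hPdeg ▸ Nat.Coprime.symm hgcd) fun z hz => ?_
  have hz1 : ‖z‖ < 1 := hP.norm_lt_one_of_mem_roots_map hCp hUint hUunit
    (fun n hn => hcoeff_f n ▸ hWdeg.1 _ (by omega)) hz
  have hPz := Polynomial.isRoot_of_mem_roots hz
  rw [hPdeg, Nat.cast_pred hp.pos]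
  refine hroots z hz1 (fun hz0 => hP0 ?_) ?_
  · rwa [hz0, Polynomial.IsRoot, ← Polynomial.coeff_zero_eq_eval_zero, Polynomial.coeff_map,
      _root_.map_eq_zero] at hPz
  · rw [hfac, PSEval_X_mul_coe_mul hCp hPint hUint hz1, ← Polynomial.eval_map, hPz.eq_zero,
      zero_mul, mul_zero]

/-- Let `K/ℚ_p` have ramification index `e` with `gcd(e, p-1) = 1`, and let
`f ∈ X·O_K[[X]]` with `f'(0)` a uniformizer of `ℤ_p`, Weierstrass degree `p`, and all
`p - 1` nonzero roots of `f` in the open unit disk of `ℂ_p` of valuation `v_K = e/(p-1)`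
(i.e. `v_p = 1/(p-1)`).  Then the Weierstrass polynomial of `f(X)/X` is irreducible
over `K`. -/
theorem weierstrass_polynomial_irreducible
    {p : ℕ} [Fact p.Prime] (K : Type*) [NormedField K]
    [Algebra ℚ_[p] K] [FiniteDimensional ℚ_[p] K]
    (hiso : ∀ x : ℚ_[p], ‖algebraMap ℚ_[p] K x‖ = ‖x‖)
    (hKna : ∀ x y : K, ‖x + y‖ ≤ max ‖x‖ ‖y‖)
    -- ramification index e of K/ℚ_p, with gcd(e, p-1) = 1
    (e : ℕ) (he : 0 < e)
    (hvalgrp : ∀ x : K, x ≠ 0 → ∃ m : ℤ, ‖x‖ = (p : ℝ) ^ (-(m : ℝ) / (e : ℝ)))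
    (hram : ∃ x : K, x ≠ 0 ∧ ‖x‖ = (p : ℝ) ^ (-(1 : ℝ) / (e : ℝ)))
    (hgcd : Nat.gcd e (p - 1) = 1)
    -- the field ℂ_p
    (Cp : Type*) [NormedField Cp] [IsAlgClosed Cp] [CompleteSpace Cp] [Algebra K Cp]
    (hCp : ∀ x : K, ‖algebraMap K Cp x‖ = ‖x‖)
    (hna : ∀ x y : Cp, ‖x + y‖ ≤ max ‖x‖ ‖y‖)
    -- the series f
    (f : PowerSeries K)
    (hint : ∀ n : ℕ, ‖PowerSeries.coeff n f‖ ≤ 1)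
    (h0 : PowerSeries.constantCoeff f = 0)
    (hunif : ∃ a : ℚ_[p], ‖a‖ = (p : ℝ)⁻¹ ∧ algebraMap ℚ_[p] K a = PowerSeries.coeff 1 f)
    (hWdeg : (∀ n : ℕ, n < p → ‖PowerSeries.coeff n f‖ < 1) ∧ ‖PowerSeries.coeff p f‖ = 1)
    (hroots : ∀ x : Cp, ‖x‖ < 1 → x ≠ 0 → PSEval f x = 0 →
      ‖x‖ = (p : ℝ) ^ (-(1 : ℝ) / ((p : ℝ) - 1)))
    -- the Weierstrass factorization f = X · P · U
    (P : Polynomial K) (U : PowerSeries K)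
    (hP : P.Monic) (hPdeg : P.natDegree = p - 1)
    (hPint : ∀ n : ℕ, ‖P.coeff n‖ ≤ 1)
    (hUint : ∀ n : ℕ, ‖PowerSeries.coeff n U‖ ≤ 1)
    (hUunit : ‖PowerSeries.constantCoeff U‖ = 1)
    (hfac : f = PowerSeries.X * ((P : PowerSeries K) * U)) :
    Irreducible P :=
  weierstrass_polynomial_irreducible_general K hKna e he hvalgrp hgcd Cp hCp hna f hunif hWdeg
    hroots P U hP hPdeg hPint hUint hUunit hfac
end

section
/- In the setting above, the element ϖ_n = (a^{∘m}(π_{(n+m)r} mod ω_L))_{m≥0} of R is not algebraic over 𝔽_p for any n ≥ 0; consequently, the ring homomorphism 𝔽_q[[X_n]] → R sending X_n to ϖ_n is injective, and the kernel of the induced map φ_ϖ : A_∞(O_L) → R equals ω_L·A_∞(O_L). -/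
open PowerSeries

noncomputable def PSIter {R : Type*} [CommRing R] (f : PowerSeries R) : ℕ → PowerSeries R
  | 0 => PowerSeries.X
  | n + 1 => PSComp f (PSIter f n)

/-! The nonarchimedean `v` is an absolute value, trivial on `𝔽_p`. If `P(ϖ) = 0` with `P ≠ 0`,
cancelling the powers of `ϖ ≠ 0` leaves `Q(ϖ) = 0` with `Q(0) ≠ 0`, so `Q(0) = -ϖ (Q / X)(ϖ)`:
the left side has absolute value `1`, the right side at most `v ϖ < 1`. Over the local ring `O`
a power series with unit constant term is a unit, so `φ ∘ ι n` kills a series only if its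
constant term lies in `(ω)`; subtracting it and cancelling `ϖ_n` gives the same for every
coefficient. Finally every element of `A` is congruent modulo `ω` to some `ι n g`. -/

namespace IsNonarchimedean

variable {R : Type*} [Ring R] {v : R → ℝ}

theorem apply_nsmul_le_max_zero (hna : IsNonarchimedean v) (hv0 : v 0 = 0) (y : R) (n : ℕ) :
    v (n • y) ≤ max 0 (v y) := by
  induction n with
  | zero => simp [hv0]
  | succ n ih => exact (succ_nsmul y n ▸ hna _ _).trans (max_le ih (le_max_right _ _))

theorem nonneg_of_charP (p : ℕ) [CharP R p] [NeZero p] (hna : IsNonarchimedean v)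
    (hv0 : v 0 = 0) (hv1 : v 1 = 1) (hvmul : ∀ x y, v (x * y) = v x * v y) (x : R) :
    0 ≤ v x := by
  have hsq : v (-1) * v (-1) = 1 := by rw [← hvmul, neg_one_mul, neg_neg, hv1]
  -- `1 = (p - 1) • (-1)` in characteristic `p`, which rules out `v (-1) = -1`.
  have hlower : 1 ≤ max 0 (v (-1)) := by
    have h : (p - 1) • (-1 : R) = 1 := by
      rw [nsmul_eq_mul, mul_neg_one, Nat.cast_pred (NeZero.pos p), CharP.cast_eq_zero,
        zero_sub, neg_neg]
    simpa [h, hv1] using hna.apply_nsmul_le_max_zero hv0 (-1 : R) (p - 1)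
  have hneg : v (-1) = 1 := by
    rcases le_max_iff.mp hlower with h | h <;> nlinarith
  have h := hna x (-x)
  rwa [add_neg_cancel, hv0, neg_eq_neg_one_mul, hvmul, hneg, one_mul, max_self] at h

end IsNonarchimedean

noncomputable def AbsoluteValue.ofIsNonarchimedean {R : Type*} [Ring R] {v : R → ℝ}
    (hnonneg : ∀ x, 0 ≤ v x) (hv0 : ∀ x, v x = 0 ↔ x = 0)
    (hvmul : ∀ x y, v (x * y) = v x * v y) (hna : IsNonarchimedean v) : AbsoluteValue R ℝ where
  toFun := v
  map_mul' := hvmul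
  nonneg' := hnonneg
  eq_zero' := hv0
  add_le' _ _ := hna.add_le hnonneg

theorem AbsoluteValue.apply_ringHom_eq_one_of_fintype {K R : Type*} [Field K] [Fintype K]
    [Ring R] [Nontrivial R] (abv : AbsoluteValue R ℝ) (i : K →+* R) {c : K} (hc : c ≠ 0) :
    abv (i c) = 1 := by
  have hq : Fintype.card K - 1 ≠ 0 := by have := Fintype.one_lt_card (α := K); omega
  refine (pow_eq_one_iff_of_nonneg (abv.nonneg _) hq).mp ?_
  rw [← abv.map_pow, ← map_pow, FiniteField.pow_card_sub_one_eq_one c hc, map_one, abv.map_one]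

namespace Polynomial

variable {K R : Type*} [Field K] [CommRing R] (abv : AbsoluteValue R ℝ) (i : K →+* R) {x : R}

theorem abv_eval₂_le_one [Nontrivial R] (hna : IsNonarchimedean abv)
    (hi : ∀ c, c ≠ 0 → abv (i c) = 1) (hx : abv x ≤ 1) (P : K[X]) :
    abv (P.eval₂ i x) ≤ 1 := by
  induction P using Polynomial.induction_on' with
  | add P Q hP hQ => exact (eval₂_add i x ▸ hna _ _).trans (max_le hP hQ)
  | monomial n c =>
    rw [eval₂_monomial, map_mul, abv.map_pow]
    refine mul_le_one₀ ?_ (pow_nonneg (abv.nonneg x) n) (pow_le_one₀ (abv.nonneg x) hx)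
    rcases eq_or_ne c 0 with rfl | hc
    · simp
    · exact (hi c hc).le

theorem eval₂_ne_zero_of_coeff_zero_ne_zero [Nontrivial R] (hna : IsNonarchimedean abv)
    (hi : ∀ c, c ≠ 0 → abv (i c) = 1) (hx : abv x < 1) {P : K[X]}
    (hP : P.coeff 0 ≠ 0) : P.eval₂ i x ≠ 0 := by
  intro hev
  have hconst : i (P.coeff 0) = -(x * P.divX.eval₂ i x) := by
    rw [eq_neg_iff_add_eq_zero, add_comm, ← hev]
    conv_rhs => rw [← X_mul_divX_add P]
    rw [eval₂_add, eval₂_mul, eval₂_X, eval₂_C]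
  have hlt : abv (i (P.coeff 0)) < 1 := by
    rw [hconst, abv.map_neg, map_mul]
    calc abv x * abv (P.divX.eval₂ i x) ≤ abv x :=
          mul_le_of_le_one_right (abv.nonneg x) (abv_eval₂_le_one abv i hna hi hx.le _)
      _ < 1 := hx
  exact hlt.ne (hi _ hP)

theorem eval₂_ne_zero_of_abv_pos_of_abv_lt_one [IsDomain R] (hna : IsNonarchimedean abv)
    (hi : ∀ c, c ≠ 0 → abv (i c) = 1) (hx0 : 0 < abv x) (hx1 : abv x < 1) {P : K[X]}
    (hP : P ≠ 0) : P.eval₂ i x ≠ 0 := by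
  obtain ⟨Q, hPQ, hQ⟩ := exists_eq_pow_rootMultiplicity_mul_and_not_dvd P hP 0
  rw [map_zero, sub_zero] at hPQ hQ
  rw [hPQ, eval₂_mul, eval₂_X_pow]
  exact mul_ne_zero (pow_ne_zero _ (abv.pos_iff.mp hx0))
    (eval₂_ne_zero_of_coeff_zero_ne_zero abv i hna hi hx1 (mt X_dvd_iff.mpr hQ))

end Polynomial

namespace PowerSeries

section LocalRing

variable {O S : Type*} [CommRing O] [IsLocalRing O] [CommRing S] [IsDomain S]
  {ψ : O⟦X⟧ →+* S}

theorem constantCoeff_mem_maximalIdeal_of_map_eq_zero {g : O⟦X⟧} (hg : ψ g = 0) :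
    constantCoeff g ∈ IsLocalRing.maximalIdeal O := by
  by_contra hunit
  rw [IsLocalRing.notMem_maximalIdeal, ← isUnit_iff_constantCoeff] at hunit
  exact (hunit.map ψ).ne_zero hg

theorem coeff_mem_maximalIdeal_of_map_eq_zero
    (hψ : ∀ a ∈ IsLocalRing.maximalIdeal O, ψ (C a) = 0) (hX : ψ X ≠ 0) {g : O⟦X⟧}
    (hg : ψ g = 0) (k : ℕ) : coeff k g ∈ IsLocalRing.maximalIdeal O := by
  induction k generalizing g with
  | zero => simpa using constantCoeff_mem_maximalIdeal_of_map_eq_zero hg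
  | succ k ih =>
    have hshift : ψ (mk fun j => coeff (j + 1) g) * ψ X = 0 := by
      rw [← hg, ← map_mul]
      conv_rhs => rw [eq_shift_mul_X_add_const g]
      rw [map_add, hψ _ (constantCoeff_mem_maximalIdeal_of_map_eq_zero hg), add_zero]
    simpa using ih ((mul_eq_zero.mp hshift).resolve_right hX)

end LocalRing

theorem C_dvd_of_forall_dvd_coeff {O : Type*} [CommRing O] {a : O} {g : O⟦X⟧}
    (h : ∀ k, a ∣ coeff k g) : C a ∣ g := by
  choose b hb using h
  exact ⟨mk b, by ext k; rw [coeff_C_mul, coeff_mk, ← hb k]⟩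

end PowerSeries

theorem kernel_of_phi_pi_eq_span_omega_general
    {p : ℕ} [Fact p.Prime]
    (O : Type*) [CommRing O] [IsDomain O] [IsDiscreteValuationRing O]
    (ω : O) (hω : Irreducible ω)
    -- the universal f^{∘r}-consistent ring A = A_∞(O_L)
    (A : Type*) [CommRing A] [Algebra O A]
    (ι : ℕ → (PowerSeries O →ₐ[O] A))
    (hdense : ∀ (x : A) (k : ℕ), ∃ (n : ℕ) (g : PowerSeries O),
      x - ι n g ∈ (Ideal.span {algebraMap O A ω}) ^ k)
    -- the perfect characteristic-p ring R (the tilt), with its absolute value v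
    (R : Type*) [CommRing R] [IsDomain R] [CharP R p]
    (v : R → ℝ)
    (hv0 : ∀ x : R, v x = 0 ↔ x = 0)
    (hv1 : v 1 = 1)
    (hvmul : ∀ x y : R, v (x * y) = v x * v y)
    (hvadd : ∀ x y : R, v (x + y) ≤ max (v x) (v y))
    -- the G_L-equivariant map φ_ϖ with φ_ϖ(X_n) = ϖ_n
    (φ : A →+* R)
    (hφω : φ (algebraMap O A ω) = 0)
    (hϖ : ∀ n : ℕ, 0 < v (φ (ι n PowerSeries.X)) ∧ v (φ (ι n PowerSeries.X)) < 1) :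
    -- (1) each ϖ_n is not algebraic over 𝔽_p
    (∀ n : ℕ, ¬ ∃ P : Polynomial (ZMod p), P ≠ 0 ∧
      Polynomial.eval₂ (ZMod.castHom (dvd_refl p) R) (φ (ι n PowerSeries.X)) P = 0) ∧
    -- (2) the induced maps 𝔽_q[[X_n]] → R are injective
    (∀ (n : ℕ) (g : PowerSeries O), φ (ι n g) = 0 →
      ∀ k : ℕ, PowerSeries.coeff k g ∈ Ideal.span {ω}) ∧
    -- (3) ker φ_ϖ = ω · A_∞(O_L)
    RingHom.ker φ = Ideal.span {algebraMap O A ω} := by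
  have hv00 : v 0 = 0 := (hv0 0).mpr rfl
  have hϖ0 : ∀ n, φ (ι n X) ≠ 0 := fun n h => (hϖ n).1.ne' (by rw [h, hv00])
  let abv := AbsoluteValue.ofIsNonarchimedean
    (IsNonarchimedean.nonneg_of_charP p hvadd hv00 hv1 hvmul) hv0 hvmul hvadd
  have hspan : Ideal.span {algebraMap O A ω} ≤ RingHom.ker φ :=
    (Ideal.span_singleton_le_iff_mem _).mpr hφω
  have hmax := (IsDiscreteValuationRing.irreducible_iff_uniformizer ω).mp hω
  have hφC : ∀ n, ∀ a ∈ IsLocalRing.maximalIdeal O, φ (ι n (C a)) = 0 := by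
    rintro n a ha
    obtain ⟨b, rfl⟩ := Ideal.mem_span_singleton'.mp (hmax ▸ ha)
    rw [C_eq_algebraMap, (ι n).commutes, map_mul, map_mul, hφω, mul_zero]
  have hcoeff : ∀ (n : ℕ) (g : PowerSeries O), φ (ι n g) = 0 →
      ∀ k : ℕ, PowerSeries.coeff k g ∈ Ideal.span {ω} := fun n g hg k =>
    hmax ▸ coeff_mem_maximalIdeal_of_map_eq_zero (ψ := φ.comp (ι n).toRingHom) (hφC n) (hϖ0 n)
      hg k
  refine ⟨fun n ⟨P, hP, hev⟩ => Polynomial.eval₂_ne_zero_of_abv_pos_of_abv_lt_one abv _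
    hvadd (fun _ => abv.apply_ringHom_eq_one_of_fintype _) (hϖ n).1 (hϖ n).2 hP hev, hcoeff,
    le_antisymm (fun x hx => ?_) hspan⟩
  obtain ⟨n, g, hxg⟩ := hdense x 1
  rw [pow_one] at hxg
  have hg : φ (ι n g) = 0 := ((RingHom.sub_mem_ker_iff φ).mp (hspan hxg)) ▸ hx
  obtain ⟨g', rfl⟩ :=
    C_dvd_of_forall_dvd_coeff fun k => Ideal.mem_span_singleton.mp (hcoeff n g hg k)
  rw [← sub_add_cancel x (ι n (C ω * g'))]
  refine add_mem hxg ?_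
  rw [map_mul, C_eq_algebraMap, (ι n).commutes]
  exact Ideal.mul_mem_right _ _ (Ideal.subset_span rfl)

/-- The elements `ϖ_n = φ_ϖ(X_n)` of the tilt `R` are transcendental over `𝔽_p`; consequently
the induced maps `𝔽_q[[X_n]] → R` are injective and the kernel of
`φ_ϖ : A_∞(O_L) → R` is exactly `ω_L · A_∞(O_L)`.  Here `R` is an integral domain of
characteristic `p` equipped with a multiplicative nonarchimedean absolute value `v`, and the
`ϖ_n` are topologically nilpotent: `0 < v(ϖ_n) < 1`. -/
theorem kernel_of_phi_pi_eq_span_omega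
    {p : ℕ} [Fact p.Prime]
    (O : Type*) [CommRing O] [IsDomain O] [IsDiscreteValuationRing O]
    (ω : O) (hω : Irreducible ω)
    (r : ℕ) (hr : 0 < r) (q : ℕ) (hq : q = p ^ r)
    (hres : Nat.card (O ⧸ Ideal.span {ω}) = q)
    (hchar : CharP (O ⧸ Ideal.span {ω}) p)
    (f : PowerSeries O) (hf0 : PowerSeries.constantCoeff f = 0)
    -- the universal f^{∘r}-consistent ring A = A_∞(O_L)
    (A : Type*) [CommRing A] [Algebra O A]
    (ι : ℕ → (PowerSeries O →ₐ[O] A))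
    (hιinj : ∀ n : ℕ, Function.Injective (ι n))
    (hcompat : ∀ (n : ℕ) (g : PowerSeries O), ι n g = ι (n + 1) (PSComp g (PSIter f r)))
    (hdense : ∀ (x : A) (k : ℕ), ∃ (n : ℕ) (g : PowerSeries O),
      x - ι n g ∈ (Ideal.span {algebraMap O A ω}) ^ k)
    (hcomplete : IsAdicComplete (Ideal.span {algebraMap O A ω}) A)
    -- the perfect characteristic-p ring R (the tilt), with its absolute value v
    (R : Type*) [CommRing R] [IsDomain R] [CharP R p] [PerfectRing R p]
    (v : R → ℝ)
    (hv0 : ∀ x : R, v x = 0 ↔ x = 0)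
    (hv1 : v 1 = 1)
    (hvmul : ∀ x y : R, v (x * y) = v x * v y)
    (hvadd : ∀ x y : R, v (x + y) ≤ max (v x) (v y))
    -- the G_L-equivariant map φ_ϖ with φ_ϖ(X_n) = ϖ_n
    (φ : A →+* R)
    (hφω : φ (algebraMap O A ω) = 0)
    (hϖ : ∀ n : ℕ, 0 < v (φ (ι n PowerSeries.X)) ∧ v (φ (ι n PowerSeries.X)) < 1) :
    -- (1) each ϖ_n is not algebraic over 𝔽_p
    (∀ n : ℕ, ¬ ∃ P : Polynomial (ZMod p), P ≠ 0 ∧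
      Polynomial.eval₂ (ZMod.castHom (dvd_refl p) R) (φ (ι n PowerSeries.X)) P = 0) ∧
    -- (2) the induced maps 𝔽_q[[X_n]] → R are injective
    (∀ (n : ℕ) (g : PowerSeries O), φ (ι n g) = 0 →
      ∀ k : ℕ, PowerSeries.coeff k g ∈ Ideal.span {ω}) ∧
    -- (3) ker φ_ϖ = ω · A_∞(O_L)
    RingHom.ker φ = Ideal.span {algebraMap O A ω} :=
  kernel_of_phi_pi_eq_span_omega_general O ω hω A ι hdense R v hv0 hv1 hvmul hvadd φ hφω hϖ
end

section
/- Let K be a finite extension of ℚ_p with ring of integers O_K, and let f ∈ X·O_K[[X]] be noninvertible with v(f'(0)) > 0 and v(f'(0) − 1) = 0. Then the only fixed point of f in the maximal ideal of O_{ℂ_p} is 0, i.e., f(x) = x with |x| < 1 implies x = 0. -/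
open PowerSeries

/-- If `f ∈ X·O_K[[X]]` is noninvertible with `v(f'(0)) > 0` and `v(f'(0) - 1) = 0`, then
the only fixed point of `f` in the maximal ideal of `O_{ℂ_p}` (the open unit disk) is `0`. -/
theorem only_fixed_point_is_zero
    {p : ℕ} [Fact p.Prime] (K : Type*) [NormedField K]
    [Algebra ℚ_[p] K] [FiniteDimensional ℚ_[p] K]
    (hiso : ∀ x : ℚ_[p], ‖algebraMap ℚ_[p] K x‖ = ‖x‖)
    (hKna : ∀ x y : K, ‖x + y‖ ≤ max ‖x‖ ‖y‖)
    (Cp : Type*) [NormedField Cp] [IsAlgClosed Cp] [CompleteSpace Cp] [Algebra K Cp]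
    (hCp : ∀ x : K, ‖algebraMap K Cp x‖ = ‖x‖)
    (hna : ∀ x y : Cp, ‖x + y‖ ≤ max ‖x‖ ‖y‖)
    (f : PowerSeries K)
    (hint : ∀ n : ℕ, ‖PowerSeries.coeff n f‖ ≤ 1)
    (h0 : PowerSeries.constantCoeff f = 0)
    -- v(f'(0)) > 0, i.e. f is noninvertible
    (hnonunit : ‖PowerSeries.coeff 1 f‖ < 1)
    -- v(f'(0) − 1) = 0
    (hone : ‖PowerSeries.coeff 1 f - 1‖ = 1) :
    ∀ x : Cp, ‖x‖ < 1 → PSEval f x = x → x = 0 := by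
  have hultra : IsUltrametricDist Cp :=
    IsUltrametricDist.isUltrametricDist_of_forall_norm_add_le_max_norm hna
  intro x hx hfix
  by_contra hx0
  have hxpos : 0 < ‖x‖ := norm_pos_iff.mpr hx0
  set g : ℕ → Cp := fun n => algebraMap K Cp (PowerSeries.coeff n f) * x ^ n with hg
  have hgnorm : ∀ n, ‖g n‖ ≤ ‖x‖ ^ n := by
    intro n
    rw [hg, norm_mul, hCp, norm_pow]
    calc ‖PowerSeries.coeff n f‖ * ‖x‖ ^ n ≤ 1 * ‖x‖ ^ n := by
          exact mul_le_mul_of_nonneg_right (hint n) (by positivity)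
      _ = ‖x‖ ^ n := one_mul _
  have hsum : Summable g := by
    apply Summable.of_norm_bounded (summable_geometric_of_lt_one (norm_nonneg x) hx) hgnorm
  -- split off first two terms
  have hsplit : ∑' n, g n = g 0 + (g 1 + ∑' n, g (n + 2)) := by
    rw [Summable.tsum_eq_zero_add hsum, Summable.tsum_eq_zero_add ((summable_nat_add_iff 1).mpr hsum)]
  have hg0 : g 0 = 0 := by
    simp [hg, show PowerSeries.coeff 0 f = 0 by rw [PowerSeries.coeff_zero_eq_constantCoeff, h0]]
  have hfix' : g 1 + ∑' n, g (n + 2) = x := by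
    have : PSEval f x = ∑' n, g n := rfl
    rw [this, hsplit, hg0, zero_add] at hfix
    exact hfix
  set T : Cp := ∑' n, g (n + 2) with hT
  have hTle : ‖T‖ ≤ ‖x‖ ^ 2 := by
    apply IsUltrametricDist.norm_tsum_le_of_forall_le_of_nonneg (by positivity)
    intro n
    calc ‖g (n + 2)‖ ≤ ‖x‖ ^ (n + 2) := hgnorm _
      _ ≤ ‖x‖ ^ 2 := pow_le_pow_of_le_one (norm_nonneg x) hx.le (by omega)
  -- (a₁ - 1) x = -T
  have key : (algebraMap K Cp (PowerSeries.coeff 1 f) - 1) * x = -T := by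
    have : g 1 = algebraMap K Cp (PowerSeries.coeff 1 f) * x := by simp [hg]
    rw [sub_mul, one_mul, ← this]
    linear_combination hfix'
  have hnormkey : ‖(algebraMap K Cp (PowerSeries.coeff 1 f) - 1) * x‖ = ‖x‖ := by
    rw [norm_mul]
    have : ‖algebraMap K Cp (PowerSeries.coeff 1 f) - 1‖ = 1 := by
      rw [show (1 : Cp) = algebraMap K Cp 1 from (map_one _).symm, ← map_sub, hCp, hone]
    rw [this, one_mul]
  rw [key, norm_neg] at hnormkey
  have : ‖x‖ ≤ ‖x‖ ^ 2 := hnormkey ▸ hTle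
  nlinarith [hxpos, hx]
end
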